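/- arXiv:2602.21173 — 4 statements merged into one kernel-verified Lean document; each statement's English description precedes it below -/
import Mathlib

section
/- Let $R$ be an integrable random vector in $\mathbb{R}^K$ such that for every nonzero $a \in \mathbb{R}^K$ the scalar product $a \cdot R$ is not almost surely equal to $0$, let $U : \mathbb{R} \to \mathbb{R}$ be strictly concave and continuous, let $w_b \in \mathbb{R}^K$, and assume that $U((w_b+v)\cdot R)$ is integrable for every $v \in \mathbb{R}^K$. Then the function $F : \mathbb{R}^K \to \mathbb{R}$ defined by $F(v) = \mathbb{E}[U((w_b+v)\cdot R)]$ is strictly concave. -/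
open Matrix MeasureTheory

/-- If `R` is an integrable random vector in `ℝ^K` such that `a ⬝ᵥ R` is not
almost surely `0` for every nonzero `a`, `U` is strictly concave and continuous, and
`U ((w_b + v) ⬝ᵥ R)` is integrable for every `v`, then
`F v = 𝔼[U ((w_b + v) ⬝ᵥ R)]` is strictly concave. -/
theorem expected_utility_strictConcave
    {Ω : Type*} [MeasurableSpace Ω] (μ : Measure Ω) [IsProbabilityMeasure μ]
    {K : ℕ} (R : Ω → Fin K → ℝ) (hRint : Integrable R μ)
    (hnd : ∀ a : Fin K → ℝ, a ≠ 0 → ¬ (∀ᵐ ω ∂μ, a ⬝ᵥ R ω = 0))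
    (U : ℝ → ℝ) (hU : StrictConcaveOn ℝ Set.univ U) (hUcont : Continuous U)
    (w_b : Fin K → ℝ)
    (hint : ∀ v : Fin K → ℝ, Integrable (fun ω => U ((w_b + v) ⬝ᵥ R ω)) μ) :
    StrictConcaveOn ℝ Set.univ
      (fun v : Fin K → ℝ => ∫ ω, U ((w_b + v) ⬝ᵥ R ω) ∂μ) := by
  refine ⟨convex_univ, fun v _ w _ hvw a b ha hb hab => ?_⟩
  set X : Ω → ℝ := fun ω => (w_b + v) ⬝ᵥ R ω with hX
  set Y : Ω → ℝ := fun ω => (w_b + w) ⬝ᵥ R ω with hY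
  have hvec : w_b + (a • v + b • w) = a • (w_b + v) + b • (w_b + w) := by
    match_scalars <;> linarith
  have hkey : ∀ ω, (w_b + (a • v + b • w)) ⬝ᵥ R ω = a * X ω + b * Y ω := by
    intro ω
    rw [hvec, add_dotProduct, smul_dotProduct, smul_dotProduct, smul_eq_mul, smul_eq_mul]
  have hg0 : ∀ ω, a * U (X ω) + b * U (Y ω) ≤ U (a * X ω + b * Y ω) := by
    intro ω
    simpa [smul_eq_mul] using
      hU.concaveOn.2 (Set.mem_univ (X ω)) (Set.mem_univ (Y ω)) ha.le hb.le hab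
  set g : Ω → ℝ := fun ω => U (a * X ω + b * Y ω) - (a * U (X ω) + b * U (Y ω)) with hg
  have h1 : Integrable (fun ω => U (a * X ω + b * Y ω)) μ := by
    have := hint (a • v + b • w)
    simpa only [hkey] using this
  have h2 : Integrable (fun ω => a * U (X ω) + b * U (Y ω)) μ :=
    ((hint v).const_mul a).add ((hint w).const_mul b)
  have hgint : Integrable g μ := h1.sub h2
  have hpos : 0 < ∫ ω, g ω ∂μ := by
    rw [integral_pos_iff_support_of_nonneg_ae
      (Filter.Eventually.of_forall fun ω => sub_nonneg.2 (hg0 ω)) hgint]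
    by_contra h
    have hnull : μ (Function.support g) = 0 := by
      simpa [le_zero_iff] using not_lt.mp h
    have hae : ∀ᵐ ω ∂μ, g ω = 0 := by
      refine (ae_iff).2 ?_
      simpa [Function.support] using hnull
    refine hnd (v - w) (sub_ne_zero.2 hvw) ?_
    filter_upwards [hae] with ω hω
    have hXY : X ω = Y ω := by
      by_contra hne
      have hstrict := hU.2 (Set.mem_univ (X ω)) (Set.mem_univ (Y ω)) hne ha hb hab
      simp only [smul_eq_mul] at hstrict
      simp only [hg] at hω
      linarith
    have hdiff : (v - w) ⬝ᵥ R ω = X ω - Y ω := by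
      simp only [hX, hY, sub_dotProduct, add_dotProduct]
      ring
    rw [hdiff, hXY, sub_self]
  have hsplit : ∫ ω, g ω ∂μ =
      (∫ ω, U (a * X ω + b * Y ω) ∂μ) - (a * ∫ ω, U (X ω) ∂μ + b * ∫ ω, U (Y ω) ∂μ) := by
    rw [hg, integral_sub h1 h2, integral_add ((hint v).const_mul a) ((hint w).const_mul b),
      integral_const_mul, integral_const_mul]
  have hFcombo : ∫ ω, U ((w_b + (a • v + b • w)) ⬝ᵥ R ω) ∂μ
      = ∫ ω, U (a * X ω + b * Y ω) ∂μ := by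
    simp only [hkey]
  simp only [smul_eq_mul]
  rw [hsplit] at hpos
  have : ∫ ω, U ((w_b + (a • v + b • w)) ⬝ᵥ R ω) ∂μ
      = ∫ ω, U (a * X ω + b * Y ω) ∂μ := hFcombo
  linarith [hpos, this.ge, this.le]
end

section
/- (Proposition 1, Equation (jensen).) Let $R$ be an integrable random vector in $\mathbb{R}^K$ such that for every nonzero $a \in \mathbb{R}^K$ the scalar product $a \cdot R$ is not almost surely equal to $0$, let $U : \mathbb{R} \to \mathbb{R}$ be strictly concave and continuous, let $w_b \in \mathbb{R}^K$, $z \in \mathbb{R}^L$, and assume $U((w_b+\theta_0 z)\cdot R)$ is integrable for every $K \times L$ matrix $\theta_0$. Let $\theta$ be a random $K \times L$ real matrix, independent of $R$, with integrable entries, posterior mean $m = \mathbb{E}[\theta]$, such that the tilt vector $\theta z$ is not almost surely constant and such that $G(\theta)$ is integrable, where $G(\theta_0) = \mathbb{E}[U((w_b+\theta_0 z)\cdot R)]$. Then $\mathbb{E}[G(\theta)] < G(m)$. -/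
open Matrix MeasureTheory ProbabilityTheory

/-!
Writing `v = θ₀ *ᵥ z` for the tilt, `G θ₀` depends on `θ₀` only through `v`, say `G θ₀ = g v`.
Since `a ⬝ᵥ R` is not a.s. `0` for `a ≠ 0`, two different tilts give different portfolio returns
on a set of positive measure, and there the concavity inequality for `U` is strict; integrating,
`g` is strictly concave on `ℝ^K`, hence continuous. As `z ≠ 0` every vector is a tilt, and the strict
Jensen inequality for the non-constant tilt `θ *ᵥ z`, whose mean is `m *ᵥ z`, gives the claim.
-/

section

variable {Ω ι : Type*} [MeasurableSpace Ω] {μ : Measure Ω} [Fintype ι]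

theorem StrictConcaveOn.integral_comp_dotProduct {U : ℝ → ℝ}
    (hU : StrictConcaveOn ℝ Set.univ U) {R : Ω → ι → ℝ}
    (hnd : ∀ a : ι → ℝ, a ≠ 0 → ¬ ∀ᵐ ω ∂μ, a ⬝ᵥ R ω = 0)
    (hint : ∀ v, Integrable (fun ω => U (v ⬝ᵥ R ω)) μ) :
    StrictConcaveOn ℝ Set.univ fun v : ι → ℝ => ∫ ω, U (v ⬝ᵥ R ω) ∂μ := by
  refine ⟨convex_univ, fun v _ v' _ hvv' a b ha hb hab => ?_⟩
  have hcombo : ∀ ω, (a • v + b • v') ⬝ᵥ R ω = a • (v ⬝ᵥ R ω) + b • (v' ⬝ᵥ R ω) := fun ω => by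
    rw [add_dotProduct, smul_dotProduct, smul_dotProduct]
  have hmix : Integrable (fun ω => a * U (v ⬝ᵥ R ω) + b * U (v' ⬝ᵥ R ω)) μ :=
    ((hint v).const_mul a).add ((hint v').const_mul b)
  set gap : Ω → ℝ := fun ω =>
    U ((a • v + b • v') ⬝ᵥ R ω) - (a * U (v ⬝ᵥ R ω) + b * U (v' ⬝ᵥ R ω))
  have hgap_nonneg : 0 ≤ gap := fun ω => sub_nonneg.2 <| by
    rw [hcombo]; exact hU.concaveOn.2 trivial trivial ha.le hb.le hab
  have hgap_support : {ω | ¬ (v - v') ⬝ᵥ R ω = 0} ⊆ Function.support gap := fun ω hω => by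
    have hne : v ⬝ᵥ R ω ≠ v' ⬝ᵥ R ω := by
      rwa [Set.mem_ofPred_eq, sub_dotProduct, sub_eq_zero] at hω
    have := hU.2 trivial trivial hne ha hb hab
    simp only [Function.mem_support, gap, hcombo]
    simp only [smul_eq_mul] at this ⊢
    linarith
  have hnull : μ {ω | ¬ (v - v') ⬝ᵥ R ω = 0} ≠ 0 :=
    fun h => hnd _ (sub_ne_zero.2 hvv') (ae_iff.2 h)
  have hgap_integral_pos : 0 < ∫ ω, gap ω ∂μ :=
    (integral_pos_iff_support_of_nonneg hgap_nonneg ((hint _).sub hmix)).2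
      ((pos_iff_ne_zero.2 hnull).trans_le (measure_mono hgap_support))
  rw [integral_sub (hint _) hmix, integral_add ((hint v).const_mul a) ((hint v').const_mul b),
    integral_const_mul, integral_const_mul] at hgap_integral_pos
  simp only [smul_eq_mul]
  linarith

variable {m n : Type*} [Fintype m] [Fintype n] {θ : Ω → Matrix m n ℝ}

theorem integrable_mulVec_const (hθ : ∀ k l, Integrable (fun ω => θ ω k l) μ) (z : n → ℝ) :
    Integrable (fun ω => θ ω *ᵥ z) μ :=
  Integrable.of_eval fun k =>
    integrable_finsetSum _ fun l _ => (hθ k l).mul_const (z l)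

theorem integral_mulVec_const (hθ : ∀ k l, Integrable (fun ω => θ ω k l) μ)
    {M : Matrix m n ℝ} (hM : ∀ k l, M k l = ∫ ω, θ ω k l ∂μ) (z : n → ℝ) :
    ∫ ω, θ ω *ᵥ z ∂μ = M *ᵥ z := by
  funext k
  rw [eval_integral (integrable_mulVec_const hθ z).eval]
  simp only [mulVec, dotProduct, hM]
  rw [integral_finsetSum _ fun l _ => (hθ k l).mul_const (z l)]
  simp only [integral_mul_const]

end

theorem Matrix.exists_mulVec_eq {𝕜 m n : Type*} [Field 𝕜] [LinearOrder 𝕜] [IsStrictOrderedRing 𝕜]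
    [Fintype n] {z : n → 𝕜} (hz : z ≠ 0) (v : m → 𝕜) : ∃ θ : Matrix m n 𝕜, θ *ᵥ z = v :=
  ⟨(z ⬝ᵥ z)⁻¹ • vecMulVec v z, by
    rw [smul_mulVec, vecMulVec_mulVec, op_smul_eq_smul, smul_smul,
      inv_mul_cancel₀ (mt dotProduct_self_eq_zero.1 hz), one_smul]⟩

theorem ppp_overstates_expected_utility_general
    {Ω : Type*} [MeasurableSpace Ω] (μ : Measure Ω) [IsProbabilityMeasure μ]
    {K L : ℕ} (R : Ω → Fin K → ℝ)
    (hnd : ∀ a : Fin K → ℝ, a ≠ 0 → ¬ (∀ᵐ ω ∂μ, a ⬝ᵥ R ω = 0))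
    (U : ℝ → ℝ) (hU : StrictConcaveOn ℝ Set.univ U)
    (w_b : Fin K → ℝ) (z : Fin L → ℝ)
    (hint : ∀ θ₀ : Matrix (Fin K) (Fin L) ℝ,
      Integrable (fun ω => U ((w_b + θ₀ *ᵥ z) ⬝ᵥ R ω)) μ)
    (θ : Ω → Matrix (Fin K) (Fin L) ℝ)
    (hθint : ∀ k l, Integrable (fun ω => θ ω k l) μ)
    (m : Matrix (Fin K) (Fin L) ℝ) (hm : ∀ k l, m k l = ∫ ω, θ ω k l ∂μ)
    (hnc : ¬ ∃ c : Fin K → ℝ, ∀ᵐ ω ∂μ, θ ω *ᵥ z = c)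
    (G : Matrix (Fin K) (Fin L) ℝ → ℝ)
    (hG : ∀ θ₀, G θ₀ = ∫ ω, U ((w_b + θ₀ *ᵥ z) ⬝ᵥ R ω) ∂μ)
    (hGint : Integrable (fun ω => G (θ ω)) μ) :
    ∫ ω, G (θ ω) ∂μ < G m := by
  have hz : z ≠ 0 := by
    rintro rfl
    exact hnc ⟨0, .of_forall fun ω => mulVec_zero _⟩
  set g : (Fin K → ℝ) → ℝ := fun v => ∫ ω, U ((w_b + v) ⬝ᵥ R ω) ∂μ
  have hg : StrictConcaveOn ℝ Set.univ g := by
    have hint' : ∀ v, Integrable (fun ω => U (v ⬝ᵥ R ω)) μ := fun v => by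
      obtain ⟨θ₀, hθ₀⟩ := exists_mulVec_eq hz (v - w_b)
      simpa [hθ₀] using hint θ₀
    have := (hU.integral_comp_dotProduct hnd hint').translate_right w_b
    rwa [Set.preimage_univ] at this
  have hGθ : (fun ω => G (θ ω)) = g ∘ fun ω => θ ω *ᵥ z := funext fun ω => hG _
  rcases hg.ae_eq_const_or_lt_map_average (hg.concaveOn.continuousOn isOpen_univ) isClosed_univ
      (.of_forall fun _ => trivial) (integrable_mulVec_const hθint z) (hGθ ▸ hGint)
    with hconst | hlt
  · exact absurd ⟨_, hconst⟩ hnc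
  · rw [average_eq_integral, average_eq_integral, integral_mulVec_const hθint hm,
      ← Function.comp_def g, ← hGθ] at hlt
    exact (hG m).symm ▸ hlt

/-- **Proposition 1, Equation (jensen).** With `R` an integrable random vector such
that `a ⬝ᵥ R` is not a.s. `0` for nonzero `a`, `U` strictly concave and continuous,
`G θ₀ = 𝔼[U ((w_b + θ₀ *ᵥ z) ⬝ᵥ R)]` integrable in all the required senses, and `θ` a random
`K × L` matrix independent of `R` with integrable entries, posterior mean `m`, whose tilt `θ *ᵥ z`
is not almost surely constant, one has the strict Jensen gap `𝔼[G (θ)] < G m`. -/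
theorem ppp_overstates_expected_utility
    {Ω : Type*} [MeasurableSpace Ω] (μ : Measure Ω) [IsProbabilityMeasure μ]
    {K L : ℕ} (R : Ω → Fin K → ℝ) (hRint : Integrable R μ)
    (hnd : ∀ a : Fin K → ℝ, a ≠ 0 → ¬ (∀ᵐ ω ∂μ, a ⬝ᵥ R ω = 0))
    (U : ℝ → ℝ) (hU : StrictConcaveOn ℝ Set.univ U) (hUcont : Continuous U)
    (w_b : Fin K → ℝ) (z : Fin L → ℝ)
    (hint : ∀ θ₀ : Matrix (Fin K) (Fin L) ℝ,
      Integrable (fun ω => U ((w_b + θ₀ *ᵥ z) ⬝ᵥ R ω)) μ)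
    (θ : Ω → Matrix (Fin K) (Fin L) ℝ)
    (hindep : IndepFun (fun ω => Matrix.of.symm (θ ω)) R μ)
    (hθint : ∀ k l, Integrable (fun ω => θ ω k l) μ)
    (m : Matrix (Fin K) (Fin L) ℝ) (hm : ∀ k l, m k l = ∫ ω, θ ω k l ∂μ)
    (hnc : ¬ ∃ c : Fin K → ℝ, ∀ᵐ ω ∂μ, θ ω *ᵥ z = c)
    (G : Matrix (Fin K) (Fin L) ℝ → ℝ)
    (hG : ∀ θ₀, G θ₀ = ∫ ω, U ((w_b + θ₀ *ᵥ z) ⬝ᵥ R ω) ∂μ)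
    (hGint : Integrable (fun ω => G (θ ω)) μ) :
    ∫ ω, G (θ ω) ∂μ < G m :=
  ppp_overstates_expected_utility_general μ R hnd U hU w_b z hint θ hθint m hm hnc G hG hGint
end

section
/- (Explicit utility gap under isotropic posterior covariance.) Let $U(r) = r - \tfrac{\gamma}{2}r^2$ with $\gamma > 0$. Let $R$ be a random vector in $\mathbb{R}^K$ with finite second moments and $\theta$ a random $K \times L$ real matrix independent of $R$ whose entries have pairwise covariance zero and common variance $\sigma^2 > 0$. Fix $w_b \in \mathbb{R}^K$, $z \in \mathbb{R}^L$, set $m = \mathbb{E}[\theta]$ and $G(\theta_0) = \mathbb{E}[U((w_b+\theta_0 z)\cdot R)]$. Then $G(m) - \mathbb{E}[G(\theta)] = \tfrac{\gamma}{2}\,\sigma^2\,\|z\|^2\,\mathbb{E}[\|R\|^2]$; in particular, if $\mathbb{E}[\|R\|^2] > 0$ this gap is strictly increasing in $\gamma$, in $\sigma$, and in $\|z\|$. -/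
/-!
For a fixed weight vector `c`, quadratic utility gives
`𝔼[U (c ⬝ᵥ R)] = c ⬝ᵥ 𝔼[R] - γ/2 · c ⬝ᵥ S c` with `S = 𝔼[R Rᵀ]`, so `G` is a quadratic function of
the weight `w_b + θ₀ z`. Averaging a quadratic over the random weight `w_b + θ z` gives its value
at the mean weight `w_b + m z` minus `γ/2 · ∑ᵢⱼ Sᵢⱼ Cov(wᵢ, wⱼ)`, and isotropy of `θ` makes that
covariance `σ² ‖z‖² I`. The gap is therefore `γ/2 · σ² ‖z‖² · tr S`, and `tr S = 𝔼‖R‖²`.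
-/

open Matrix MeasureTheory ProbabilityTheory Finset

lemma memLp_two_of_integrable_mul_self {Ω : Type*} [MeasurableSpace Ω] {μ : Measure Ω}
    {Y : Ω → ℝ} (h₁ : Integrable Y μ) (h₂ : Integrable (fun ω => Y ω * Y ω) μ) : MemLp Y 2 μ :=
  (memLp_two_iff_integrable_sq h₁.aestronglyMeasurable).2 (by simpa only [sq] using h₂)

section RandomVector

variable {Ω ι : Type*} [MeasurableSpace Ω] {μ : Measure Ω} [Fintype ι] {X : Ω → ι → ℝ}

noncomputable def meanVec (μ : Measure Ω) (X : Ω → ι → ℝ) : ι → ℝ :=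
  fun i => ∫ ω, X ω i ∂μ

noncomputable def secondMomentMatrix (μ : Measure Ω) (X : Ω → ι → ℝ) : Matrix ι ι ℝ :=
  Matrix.of fun i j => ∫ ω, X ω i * X ω j ∂μ

noncomputable def covMatrix (μ : Measure Ω) (X : Ω → ι → ℝ) : Matrix ι ι ℝ :=
  Matrix.of fun i j => cov[fun ω => X ω i, fun ω => X ω j; μ]

lemma memLp_dotProduct {p : ENNReal} (c : ι → ℝ) (hX : ∀ i, MemLp (fun ω => X ω i) p μ) :
    MemLp (fun ω => c ⬝ᵥ X ω) p μ :=
  memLp_finsetSum _ fun i _ => (hX i).const_mul (c i)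

lemma integral_dotProduct (c : ι → ℝ) (hX : ∀ i, Integrable (fun ω => X ω i) μ) :
    ∫ ω, c ⬝ᵥ X ω ∂μ = c ⬝ᵥ meanVec μ X := by
  simp only [dotProduct, meanVec]
  rw [integral_finsetSum _ fun i _ => (hX i).const_mul _]
  simp only [integral_const_mul]

lemma integral_sum_sum_mul (a : ι → ι → ℝ)
    (hX : ∀ i j, Integrable (fun ω => X ω i * X ω j) μ) :
    ∫ ω, ∑ i, ∑ j, a i j * (X ω i * X ω j) ∂μ
      = ∑ i, ∑ j, a i j * secondMomentMatrix μ X i j := by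
  rw [integral_finsetSum _ fun i _ => integrable_finsetSum _ fun j _ => (hX i j).const_mul _]
  refine sum_congr rfl fun i _ => ?_
  rw [integral_finsetSum _ fun j _ => (hX i j).const_mul _]
  simp only [integral_const_mul, secondMomentMatrix, of_apply]

lemma integral_dotProduct_sq (c : ι → ℝ) (hX : ∀ i j, Integrable (fun ω => X ω i * X ω j) μ) :
    ∫ ω, (c ⬝ᵥ X ω) ^ 2 ∂μ = c ⬝ᵥ (secondMomentMatrix μ X *ᵥ c) := by
  have hsq : ∀ x : ι → ℝ, (c ⬝ᵥ x) ^ 2 = ∑ i, ∑ j, (c i * c j) * (x i * x j) := fun x => by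
    simp only [sq, dotProduct, sum_mul_sum]
    exact sum_congr rfl fun i _ => sum_congr rfl fun j _ => by ring
  calc ∫ ω, (c ⬝ᵥ X ω) ^ 2 ∂μ = ∫ ω, ∑ i, ∑ j, (c i * c j) * (X ω i * X ω j) ∂μ := by
        simp only [hsq]
    _ = ∑ i, ∑ j, (c i * c j) * secondMomentMatrix μ X i j := integral_sum_sum_mul _ hX
    _ = c ⬝ᵥ (secondMomentMatrix μ X *ᵥ c) := by
        simp only [dotProduct, mulVec, mul_sum]
        exact sum_congr rfl fun i _ => sum_congr rfl fun j _ => by ring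

lemma integral_quadraticUtility [IsFiniteMeasure μ] (γ : ℝ) (c : ι → ℝ)
    (hX : ∀ i, MemLp (fun ω => X ω i) 2 μ) :
    ∫ ω, (c ⬝ᵥ X ω - γ / 2 * (c ⬝ᵥ X ω) ^ 2) ∂μ
      = c ⬝ᵥ meanVec μ X - γ / 2 * c ⬝ᵥ (secondMomentMatrix μ X *ᵥ c) := by
  have hc := memLp_dotProduct c hX
  rw [integral_sub (hc.integrable one_le_two) (hc.integrable_sq.const_mul _), integral_const_mul,
    integral_dotProduct c fun i => (hX i).integrable one_le_two,
    integral_dotProduct_sq c fun i j => (hX i).integrable_mul (hX j)]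

lemma trace_secondMomentMatrix (hX : ∀ i, Integrable (fun ω => X ω i * X ω i) μ) :
    (secondMomentMatrix μ X).trace = ∫ ω, ∑ i, X ω i ^ 2 ∂μ := by
  simp only [sq]
  rw [integral_finsetSum _ fun i _ => hX i]
  rfl

omit [MeasurableSpace Ω] in
lemma dotProduct_mulVec_self_eq_sum_sum (M : Matrix ι ι ℝ) (x : ι → ℝ) :
    x ⬝ᵥ (M *ᵥ x) = ∑ i, ∑ j, M i j * (x i * x j) := by
  simp only [dotProduct, mulVec, mul_sum]
  exact sum_congr rfl fun i _ => sum_congr rfl fun j _ => by ring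

lemma integral_dotProduct_mulVec_self (M : Matrix ι ι ℝ)
    (hX : ∀ i j, Integrable (fun ω => X ω i * X ω j) μ) :
    ∫ ω, X ω ⬝ᵥ (M *ᵥ X ω) ∂μ = ∑ i, ∑ j, M i j * secondMomentMatrix μ X i j := by
  simp only [dotProduct_mulVec_self_eq_sum_sum]
  exact integral_sum_sum_mul _ hX

omit [Fintype ι] in
lemma secondMomentMatrix_eq_vecMulVec_add_covMatrix [IsProbabilityMeasure μ]
    (hX : ∀ i, MemLp (fun ω => X ω i) 2 μ) :
    secondMomentMatrix μ X = vecMulVec (meanVec μ X) (meanVec μ X) + covMatrix μ X := by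
  ext i j
  simp only [secondMomentMatrix, covMatrix, Matrix.add_apply, vecMulVec_apply, of_apply, meanVec]
  rw [covariance_eq_sub (hX i) (hX j)]
  simp only [Pi.mul_apply]
  ring

lemma integral_dotProduct_sub_quadForm [IsProbabilityMeasure μ] (a : ι → ℝ)
    (M : Matrix ι ι ℝ) (γ : ℝ) (hX : ∀ i, MemLp (fun ω => X ω i) 2 μ) :
    ∫ ω, (X ω ⬝ᵥ a - γ / 2 * X ω ⬝ᵥ (M *ᵥ X ω)) ∂μ
      = meanVec μ X ⬝ᵥ a - γ / 2 * meanVec μ X ⬝ᵥ (M *ᵥ meanVec μ X)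
        - γ / 2 * ∑ i, ∑ j, M i j * covMatrix μ X i j := by
  have hX₁ : ∀ i, Integrable (fun ω => X ω i) μ := fun i => (hX i).integrable one_le_two
  have hX₂ : ∀ i j, Integrable (fun ω => X ω i * X ω j) μ := fun i j => (hX i).integrable_mul (hX j)
  have hlin : Integrable (fun ω => X ω ⬝ᵥ a) μ := by
    simp only [dotProduct_comm _ a]
    exact integrable_finsetSum _ fun i _ => (hX₁ i).const_mul _
  have hquad : Integrable (fun ω => X ω ⬝ᵥ (M *ᵥ X ω)) μ := by
    simp only [dotProduct_mulVec_self_eq_sum_sum]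
    exact integrable_finsetSum _ fun i _ => integrable_finsetSum _ fun j _ => (hX₂ i j).const_mul _
  rw [integral_sub hlin (hquad.const_mul _), integral_const_mul]
  simp only [dotProduct_comm _ a, integral_dotProduct a hX₁, integral_dotProduct_mulVec_self M hX₂,
    secondMomentMatrix_eq_vecMulVec_add_covMatrix hX, Matrix.add_apply, vecMulVec_apply, mul_add,
    sum_add_distrib, dotProduct_mulVec_self_eq_sum_sum M (meanVec μ X)]
  ring

end RandomVector

section RandomMatrix

variable {Ω ι κ : Type*} [MeasurableSpace Ω] {μ : Measure Ω} [IsProbabilityMeasure μ] [Fintype κ]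
  {Θ : Ω → Matrix ι κ ℝ}

lemma memLp_const_add_mulVec (w : ι → ℝ) (z : κ → ℝ) (hΘ : ∀ i k, MemLp (fun ω => Θ ω i k) 2 μ)
    (i : ι) : MemLp (fun ω => (w + Θ ω *ᵥ z) i) 2 μ := by
  have hsum : MemLp (fun ω => ∑ k, Θ ω i k * z k) 2 μ :=
    memLp_finsetSum _ fun k _ => (hΘ i k).mul_const (z k)
  exact (memLp_const (w i)).add hsum

lemma meanVec_const_add_mulVec (w : ι → ℝ) (z : κ → ℝ)
    (hΘ : ∀ i k, Integrable (fun ω => Θ ω i k) μ) :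
    meanVec μ (fun ω => w + Θ ω *ᵥ z) = w + (Matrix.of fun i k => ∫ ω, Θ ω i k ∂μ) *ᵥ z := by
  ext i
  simp only [meanVec, Pi.add_apply, mulVec, dotProduct, of_apply]
  rw [integral_add (integrable_const _) (integrable_finsetSum _ fun k _ => (hΘ i k).mul_const _),
    integral_const, integral_finsetSum _ fun k _ => (hΘ i k).mul_const _]
  simp only [integral_mul_const, probReal_univ, one_smul]

lemma covMatrix_const_add_mulVec (w : ι → ℝ) (z : κ → ℝ)
    (hΘ : ∀ i k, MemLp (fun ω => Θ ω i k) 2 μ) (i j : ι) :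
    covMatrix μ (fun ω => w + Θ ω *ᵥ z) i j
      = ∑ k, ∑ k', z k * z k' * cov[fun ω => Θ ω i k, fun ω => Θ ω j k'; μ] := by
  have hint : ∀ i, Integrable (fun ω => ∑ k, Θ ω i k * z k) μ := fun i =>
    integrable_finsetSum _ fun k _ => ((hΘ i k).integrable one_le_two).mul_const _
  simp only [covMatrix, of_apply, Pi.add_apply, mulVec, dotProduct]
  rw [covariance_const_add_left (hint i), covariance_const_add_right (hint j),
    covariance_fun_sum_fun_sum (fun k => (hΘ i k).mul_const _) fun k => (hΘ j k).mul_const _]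
  simp only [covariance_mul_const_left, covariance_mul_const_right]
  exact sum_congr rfl fun k _ => sum_congr rfl fun k' _ => by ring

lemma covMatrix_const_add_mulVec_of_isotropic [DecidableEq ι] [DecidableEq κ] (w : ι → ℝ)
    (z : κ → ℝ) (hΘ : ∀ i k, MemLp (fun ω => Θ ω i k) 2 μ) (σ : ℝ)
    (hiso : ∀ i k i' k', cov[fun ω => Θ ω i k, fun ω => Θ ω i' k'; μ]
      = if (i, k) = (i', k') then σ ^ 2 else 0) :
    covMatrix μ (fun ω => w + Θ ω *ᵥ z) = (σ ^ 2 * ∑ k, z k ^ 2) • (1 : Matrix ι ι ℝ) := by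
  ext i j
  rw [covMatrix_const_add_mulVec w z hΘ]
  simp only [hiso, Prod.mk.injEq, Matrix.smul_apply, one_apply, smul_eq_mul]
  by_cases hij : i = j
  · simp only [hij, true_and, mul_ite, mul_zero, sum_ite_eq, mem_univ, if_true, mul_one, mul_sum]
    exact sum_congr rfl fun k _ => by ring
  · simp [hij]

end RandomMatrix

theorem explicit_gap_isotropic_general
    {Ω : Type*} [MeasurableSpace Ω] (μ : Measure Ω) [IsProbabilityMeasure μ]
    {K L : ℕ} (γ : ℝ)
    (U : ℝ → ℝ) (hU : ∀ r, U r = r - γ/2 * r^2)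
    (R : Ω → Fin K → ℝ) (θ : Ω → Matrix (Fin K) (Fin L) ℝ)
    (hR1 : ∀ k, Integrable (fun ω => R ω k) μ)
    (hR2 : ∀ k k', Integrable (fun ω => R ω k * R ω k') μ)
    (hθ1 : ∀ k l, Integrable (fun ω => θ ω k l) μ)
    (hθ2 : ∀ k l k' l', Integrable (fun ω => θ ω k l * θ ω k' l') μ)
    (σ : ℝ)
    (w_b : Fin K → ℝ) (z : Fin L → ℝ)
    (m : Matrix (Fin K) (Fin L) ℝ) (hm : ∀ k l, m k l = ∫ ω, θ ω k l ∂μ)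
    (hiso : ∀ k l k' l',
      (∫ ω, (θ ω k l - m k l) * (θ ω k' l' - m k' l') ∂μ)
        = if (k, l) = (k', l') then σ^2 else 0)
    (G : Matrix (Fin K) (Fin L) ℝ → ℝ)
    (hG : ∀ θ₀, G θ₀ = ∫ ω, U ((w_b + θ₀ *ᵥ z) ⬝ᵥ R ω) ∂μ)
    (E2 : ℝ) (hE2 : E2 = ∫ ω, ∑ k, (R ω k)^2 ∂μ) :
    (G m - ∫ ω, G (θ ω) ∂μ = γ/2 * σ^2 * (∑ l, (z l)^2) * E2) ∧
    (0 < E2 →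
      (∀ g₁ g₂ s t : ℝ, 0 < s → 0 < t → 0 < g₁ → g₁ < g₂ →
        g₁/2 * s^2 * t^2 * E2 < g₂/2 * s^2 * t^2 * E2) ∧
      (∀ g s₁ s₂ t : ℝ, 0 < g → 0 < t → 0 < s₁ → s₁ < s₂ →
        g/2 * s₁^2 * t^2 * E2 < g/2 * s₂^2 * t^2 * E2) ∧
      (∀ g s t₁ t₂ : ℝ, 0 < g → 0 < s → 0 < t₁ → t₁ < t₂ →
        g/2 * s^2 * t₁^2 * E2 < g/2 * s^2 * t₂^2 * E2)) := by
  have hR : ∀ k, MemLp (fun ω => R ω k) 2 μ := fun k =>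
    memLp_two_of_integrable_mul_self (hR1 k) (hR2 k k)
  have hθ : ∀ k l, MemLp (fun ω => θ ω k l) 2 μ := fun k l =>
    memLp_two_of_integrable_mul_self (hθ1 k l) (hθ2 k l k l)
  have hcov : ∀ k l k' l', cov[fun ω => θ ω k l, fun ω => θ ω k' l'; μ]
      = if (k, l) = (k', l') then σ ^ 2 else 0 := by
    simpa only [covariance, ← hm] using hiso
  have hmean : Matrix.of (fun k l => ∫ ω, θ ω k l ∂μ) = m := (Matrix.ext hm).symm
  have hGA : ∀ A, G A = (w_b + A *ᵥ z) ⬝ᵥ meanVec μ R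
      - γ / 2 * (w_b + A *ᵥ z) ⬝ᵥ (secondMomentMatrix μ R *ᵥ (w_b + A *ᵥ z)) := fun A => by
    simp only [hG, hU]
    exact integral_quadraticUtility γ _ hR
  refine ⟨?_, fun _ => ⟨fun _ _ _ _ _ _ _ h => by gcongr, fun _ _ _ _ _ _ _ h => by gcongr,
    fun _ _ _ _ _ _ _ h => by gcongr⟩⟩
  calc G m - ∫ ω, G (θ ω) ∂μ
      = γ / 2 * ∑ i, ∑ j,
          secondMomentMatrix μ R i j * covMatrix μ (fun ω => w_b + θ ω *ᵥ z) i j := by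
        simp only [hGA]
        rw [integral_dotProduct_sub_quadForm _ _ _ (memLp_const_add_mulVec w_b z hθ),
          meanVec_const_add_mulVec w_b z hθ1, ← hmean]
        ring
    _ = γ / 2 * σ ^ 2 * (∑ l, z l ^ 2) * E2 := by
        rw [covMatrix_const_add_mulVec_of_isotropic w_b z hθ σ hcov, hE2,
          ← trace_secondMomentMatrix fun k => hR2 k k]
        simp only [Matrix.smul_apply, one_apply, smul_eq_mul, mul_ite, mul_one, mul_zero,
          sum_ite_eq, mem_univ, if_true, trace, diag_apply, ← sum_mul]
        ring

/-- **Explicit utility gap under isotropic posterior covariance.** For quadratic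
utility `U r = r - (γ/2) r²`, `R` with finite second moments, and `θ` independent of `R` with
entrywise covariance `σ² I`, the gap is `G m - 𝔼[G θ] = (γ/2) σ² ‖z‖² 𝔼‖R‖²`; in particular,
if `𝔼‖R‖² > 0` the map `(g, s, t) ↦ (g/2) s² t² 𝔼‖R‖²` giving the gap as a function of the risk
aversion `g`, the posterior scale `s` and the signal norm `t` is strictly increasing in each of
its (positive) arguments. -/
theorem explicit_gap_isotropic
    {Ω : Type*} [MeasurableSpace Ω] (μ : Measure Ω) [IsProbabilityMeasure μ]
    {K L : ℕ} (γ : ℝ) (hγ : 0 < γ)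
    (U : ℝ → ℝ) (hU : ∀ r, U r = r - γ/2 * r^2)
    (R : Ω → Fin K → ℝ) (θ : Ω → Matrix (Fin K) (Fin L) ℝ)
    (hindep : IndepFun (fun ω => Matrix.of.symm (θ ω)) R μ)
    (hR1 : ∀ k, Integrable (fun ω => R ω k) μ)
    (hR2 : ∀ k k', Integrable (fun ω => R ω k * R ω k') μ)
    (hθ1 : ∀ k l, Integrable (fun ω => θ ω k l) μ)
    (hθ2 : ∀ k l k' l', Integrable (fun ω => θ ω k l * θ ω k' l') μ)
    (σ : ℝ) (hσ : 0 < σ^2)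
    (w_b : Fin K → ℝ) (z : Fin L → ℝ)
    (m : Matrix (Fin K) (Fin L) ℝ) (hm : ∀ k l, m k l = ∫ ω, θ ω k l ∂μ)
    (hiso : ∀ k l k' l',
      (∫ ω, (θ ω k l - m k l) * (θ ω k' l' - m k' l') ∂μ)
        = if (k, l) = (k', l') then σ^2 else 0)
    (G : Matrix (Fin K) (Fin L) ℝ → ℝ)
    (hG : ∀ θ₀, G θ₀ = ∫ ω, U ((w_b + θ₀ *ᵥ z) ⬝ᵥ R ω) ∂μ)
    (E2 : ℝ) (hE2 : E2 = ∫ ω, ∑ k, (R ω k)^2 ∂μ) :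
    (G m - ∫ ω, G (θ ω) ∂μ = γ/2 * σ^2 * (∑ l, (z l)^2) * E2) ∧
    (0 < E2 →
      (∀ g₁ g₂ s t : ℝ, 0 < s → 0 < t → 0 < g₁ → g₁ < g₂ →
        g₁/2 * s^2 * t^2 * E2 < g₂/2 * s^2 * t^2 * E2) ∧
      (∀ g s₁ s₂ t : ℝ, 0 < g → 0 < t → 0 < s₁ → s₁ < s₂ →
        g/2 * s₁^2 * t^2 * E2 < g/2 * s₂^2 * t^2 * E2) ∧
      (∀ g s t₁ t₂ : ℝ, 0 < g → 0 < s → 0 < t₁ → t₁ < t₂ →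
        g/2 * s^2 * t₁^2 * E2 < g/2 * s^2 * t₂^2 * E2)) :=
  explicit_gap_isotropic_general μ γ U hU R θ hR1 hR2 hθ1 hθ2 σ w_b z m hm hiso G hG E2 hE2
end

section
/- (PPP understates portfolio risk.) Under the hypotheses of the variance decomposition — $R$ a random vector in $\mathbb{R}^K$ with finite second moments and mean $\mu$, $\theta$ a random $K \times L$ matrix independent of $R$ with finite second moments, $w_b \in \mathbb{R}^K$, $z \in \mathbb{R}^L$, and $\operatorname{Cov}(\theta z) = (z^\top \Sigma z) I_K$ for a positive semidefinite $\Sigma$ — the total variance of the portfolio return $r_p = (w_b+\theta z)\cdot R$ satisfies $\operatorname{Var}(r_p) \geq \mathbb{E}_\theta[\operatorname{Var}(r_p \mid \theta)]$, with strict inequality if and only if $(z^\top \Sigma z)\|\mu\|^2 > 0$. -/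
/-!
Write `W = w_b + θ z` for the random weights. Since `W` is independent of `R`, expanding
`Var(W ⬝ R)` over the coordinates and factoring the moments gives the law of total variance
`Var(W ⬝ R) = 𝔼_ω[Var(W ω ⬝ R)] + Var(W ⬝ μ)`. The covariance matrix of `W` is that of `θ z`,
namely `(zᵀ Σ z) I`, so the last term is `(zᵀ Σ z) ‖μ‖² ≥ 0`.
-/

open Matrix MeasureTheory ProbabilityTheory

section

variable {Ω : Type*} [MeasurableSpace Ω] {μ : Measure Ω}

lemma ProbabilityTheory.IndepFun.memLp_two_mul {X Y : Ω → ℝ} (hXY : X ⟂ᵢ[μ] Y)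
    (hX : MemLp X 2 μ) (hY : MemLp Y 2 μ) : MemLp (fun ω => X ω * Y ω) 2 μ := by
  refine (memLp_two_iff_integrable_sq (hX.1.mul hY.1)).2 ?_
  have hsq : (fun ω => X ω ^ 2) ⟂ᵢ[μ] (fun ω => Y ω ^ 2) :=
    hXY.comp (measurable_id.pow_const 2) (measurable_id.pow_const 2)
  simpa only [Pi.mul_def, mul_pow] using hsq.integrable_mul hX.integrable_sq hY.integrable_sq

lemma covariance_mul_mul_of_indepFun [IsProbabilityMeasure μ] {X X' Y Y' : Ω → ℝ}
    (h : (fun ω => (X ω, X' ω)) ⟂ᵢ[μ] (fun ω => (Y ω, Y' ω)))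
    (hX : MemLp X 2 μ) (hX' : MemLp X' 2 μ) (hY : MemLp Y 2 μ) (hY' : MemLp Y' 2 μ) :
    cov[fun ω => X ω * Y ω, fun ω => X' ω * Y' ω; μ]
      = μ[fun ω => X ω * X' ω] * cov[Y, Y'; μ] + cov[X, X'; μ] * μ[Y] * μ[Y'] := by
  have hXY : X ⟂ᵢ[μ] Y := h.comp measurable_fst measurable_fst
  have hXY' : X' ⟂ᵢ[μ] Y' := h.comp measurable_snd measurable_snd
  have hprod : (fun ω => X ω * X' ω) ⟂ᵢ[μ] (fun ω => Y ω * Y' ω) :=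
    h.comp measurable_mul measurable_mul
  have hmoment : μ[(fun ω => X ω * Y ω) * fun ω => X' ω * Y' ω]
      = μ[fun ω => X ω * X' ω] * μ[fun ω => Y ω * Y' ω] := by
    rw [← hprod.integral_mul_eq_mul_integral (hX.1.mul hX'.1) (hY.1.mul hY'.1)]
    congr 1 with ω
    simp only [Pi.mul_apply]
    ring
  rw [covariance_eq_sub (hXY.memLp_two_mul hX hY) (hXY'.memLp_two_mul hX' hY'),
    covariance_eq_sub hY hY', covariance_eq_sub hX hX', hmoment,
    hXY.integral_fun_mul_eq_mul_integral hX.1 hY.1,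
    hXY'.integral_fun_mul_eq_mul_integral hX'.1 hY'.1]
  simp only [Pi.mul_apply]
  ring

lemma covariance_add_mulVec [IsProbabilityMeasure μ] {ι κ : Type*} [Fintype κ]
    {θ : Ω → Matrix ι κ ℝ} {m : Matrix ι κ ℝ}
    (hm : ∀ i l, m i l = ∫ ω, θ ω i l ∂μ) (hθ : ∀ i l, Integrable (fun ω => θ ω i l) μ)
    (w : ι → ℝ) (z : κ → ℝ) (i j : ι) :
    cov[fun ω => (w + θ ω *ᵥ z) i, fun ω => (w + θ ω *ᵥ z) j; μ]
      = ∫ ω, ((θ ω - m) *ᵥ z) i * ((θ ω - m) *ᵥ z) j ∂μ := by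
  have hmean : ∀ i, μ[fun ω => (w + θ ω *ᵥ z) i] = (w + m *ᵥ z) i := by
    intro i
    simp only [Pi.add_apply, mulVec, dotProduct]
    rw [integral_add (integrable_const _) (integrable_finsetSum _ fun l _ => (hθ i l).mul_const _),
      integral_const, integral_finsetSum _ fun l _ => (hθ i l).mul_const _]
    simp [integral_mul_const, hm]
  rw [covariance, hmean, hmean]
  simp only [sub_mulVec, Pi.add_apply, Pi.sub_apply, add_sub_add_left_eq_sub]

variable {ι : Type*} [Fintype ι]

lemma variance_const_dotProduct [IsFiniteMeasure μ] (v : ι → ℝ) {R : Ω → ι → ℝ}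
    (hR : ∀ i, MemLp (fun ω => R ω i) 2 μ) :
    Var[fun ω => v ⬝ᵥ R ω; μ]
      = ∑ i, ∑ j, v i * v j * cov[fun ω => R ω i, fun ω => R ω j; μ] := by
  simp only [dotProduct]
  rw [variance_fun_sum fun i => (hR i).const_mul (v i)]
  simp only [covariance_const_mul_left, covariance_const_mul_right]
  exact Finset.sum_congr rfl fun i _ => Finset.sum_congr rfl fun j _ => by ring

theorem variance_dotProduct_of_indepFun [IsProbabilityMeasure μ] {W R : Ω → ι → ℝ} (hWR : W ⟂ᵢ[μ] R)
    (hW : ∀ i, MemLp (fun ω => W ω i) 2 μ) (hR : ∀ i, MemLp (fun ω => R ω i) 2 μ) :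
    Var[fun ω => W ω ⬝ᵥ R ω; μ]
      = ∫ ω, Var[fun ω' => W ω ⬝ᵥ R ω'; μ] ∂μ
        + Var[fun ω => W ω ⬝ᵥ fun i => μ[fun ω' => R ω' i]; μ] := by
  have hpair : ∀ i j, (fun ω => (W ω i, W ω j)) ⟂ᵢ[μ] (fun ω => (R ω i, R ω j)) :=
    fun i j => hWR.comp (φ := fun w => (w i, w j)) (ψ := fun r => (r i, r j))
      (by fun_prop) (by fun_prop)
  have htotal : Var[fun ω => W ω ⬝ᵥ R ω; μ] = ∑ i, ∑ j,
      (μ[fun ω => W ω i * W ω j] * cov[fun ω => R ω i, fun ω => R ω j; μ]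
        + cov[fun ω => W ω i, fun ω => W ω j; μ] * μ[fun ω => R ω i] * μ[fun ω => R ω j]) := by
    simp only [dotProduct]
    rw [variance_fun_sum (X := fun i ω => W ω i * R ω i) fun i =>
      (hWR.comp (measurable_pi_apply i) (measurable_pi_apply i)).memLp_two_mul (hW i) (hR i)]
    exact Finset.sum_congr rfl fun i _ => Finset.sum_congr rfl fun j _ =>
      covariance_mul_mul_of_indepFun (hpair i j) (hW i) (hW j) (hR i) (hR j)
  have hconditional : ∫ ω, Var[fun ω' => W ω ⬝ᵥ R ω'; μ] ∂μ = ∑ i, ∑ j,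
      μ[fun ω => W ω i * W ω j] * cov[fun ω => R ω i, fun ω => R ω j; μ] := by
    have hint : ∀ i j, Integrable
        (fun ω => W ω i * W ω j * cov[fun ω => R ω i, fun ω => R ω j; μ]) μ :=
      fun i j => ((hW i).integrable_mul (hW j)).mul_const _
    simp only [variance_const_dotProduct _ hR]
    rw [integral_finsetSum _ fun i _ => integrable_finsetSum _ fun j _ => hint i j]
    refine Finset.sum_congr rfl fun i _ => ?_
    rw [integral_finsetSum _ fun j _ => hint i j]
    exact Finset.sum_congr rfl fun j _ => integral_mul_const _ _
  have hmean : Var[fun ω => W ω ⬝ᵥ fun i => μ[fun ω' => R ω' i]; μ] = ∑ i, ∑ j,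
      cov[fun ω => W ω i, fun ω => W ω j; μ] * μ[fun ω => R ω i] * μ[fun ω => R ω j] := by
    simp only [dotProduct_comm (W _)]
    rw [variance_const_dotProduct _ hW]
    exact Finset.sum_congr rfl fun i _ => Finset.sum_congr rfl fun j _ => by ring
  rw [htotal, hconditional, hmean, ← Finset.sum_add_distrib]
  exact Finset.sum_congr rfl fun i _ => Finset.sum_add_distrib

end

/-- **PPP understates portfolio risk.** Under the hypotheses of the variance
decomposition, the total variance of the portfolio return `r_p = (w_b + θ *ᵥ z) ⬝ᵥ R` is at
least the expected conditional (market) variance `𝔼_θ[Var(r_p ∣ θ)]`, with strict inequality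
if and only if the estimation-risk term `(zᵀ Sig z) ‖μv‖²` is strictly positive. -/
theorem ppp_understates_risk
    {Ω : Type*} [MeasurableSpace Ω] (μ : Measure Ω) [IsProbabilityMeasure μ]
    {K L : ℕ} (R : Ω → Fin K → ℝ) (θ : Ω → Matrix (Fin K) (Fin L) ℝ)
    (hindep : IndepFun (fun ω => Matrix.of.symm (θ ω)) R μ)
    (hR1 : ∀ k, Integrable (fun ω => R ω k) μ)
    (hR2 : ∀ k k', Integrable (fun ω => R ω k * R ω k') μ)
    (hθ1 : ∀ k l, Integrable (fun ω => θ ω k l) μ)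
    (hθ2 : ∀ k l k' l', Integrable (fun ω => θ ω k l * θ ω k' l') μ)
    (w_b : Fin K → ℝ) (z : Fin L → ℝ)
    (μv : Fin K → ℝ) (hμv : ∀ k, μv k = ∫ ω, R ω k ∂μ)
    (m : Matrix (Fin K) (Fin L) ℝ) (hm : ∀ k l, m k l = ∫ ω, θ ω k l ∂μ)
    (Sig : Matrix (Fin L) (Fin L) ℝ) (hSig : Sig.PosSemidef)
    (CovTilt : Matrix (Fin K) (Fin K) ℝ)
    (hCovTilt : ∀ k k', CovTilt k k' =
      ∫ ω, ((θ ω - m) *ᵥ z) k * ((θ ω - m) *ᵥ z) k' ∂μ)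
    (hiso : CovTilt = (z ⬝ᵥ (Sig *ᵥ z)) • (1 : Matrix (Fin K) (Fin K) ℝ)) :
    (∫ ω, variance (fun ω' => (w_b + θ ω *ᵥ z) ⬝ᵥ R ω') μ ∂μ)
      ≤ variance (fun ω => (w_b + θ ω *ᵥ z) ⬝ᵥ R ω) μ ∧
    ((∫ ω, variance (fun ω' => (w_b + θ ω *ᵥ z) ⬝ᵥ R ω') μ ∂μ)
      < variance (fun ω => (w_b + θ ω *ᵥ z) ⬝ᵥ R ω) μ
      ↔ 0 < (z ⬝ᵥ (Sig *ᵥ z)) * ∑ k, (μv k)^2) := by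
  set W : Ω → Fin K → ℝ := fun ω => w_b + θ ω *ᵥ z
  have hθL2 : ∀ k l, MemLp (fun ω => θ ω k l) 2 μ := fun k l =>
    (memLp_two_iff_integrable_sq (hθ1 k l).1).2 (by simpa only [sq] using hθ2 k l k l)
  have hRL2 : ∀ k, MemLp (fun ω => R ω k) 2 μ := fun k =>
    (memLp_two_iff_integrable_sq (hR1 k).1).2 (by simpa only [sq] using hR2 k k)
  have hWL2 : ∀ k, MemLp (fun ω => W ω k) 2 μ := fun k => by
    simp only [W, Pi.add_apply, mulVec, dotProduct]
    exact (memLp_const (w_b k)).add (memLp_finsetSum _ fun l _ => (hθL2 k l).mul_const (z l))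
  have hWR : W ⟂ᵢ[μ] R :=
    hindep.comp (φ := fun M => w_b + Matrix.of M *ᵥ z) (by apply Continuous.measurable; fun_prop)
      measurable_id
  have hestimation : Var[fun ω => W ω ⬝ᵥ μv; μ] = (z ⬝ᵥ (Sig *ᵥ z)) * ∑ k, μv k ^ 2 := by
    simp only [dotProduct_comm (W _)]
    rw [variance_const_dotProduct _ hWL2]
    simp only [W, covariance_add_mulVec hm hθ1, ← hCovTilt, hiso]
    simp [Matrix.one_apply, Finset.mul_sum, sq, mul_comm]
  have hdecomp := variance_dotProduct_of_indepFun hWR hWL2 hRL2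
  rw [show (fun k => μ[fun ω => R ω k]) = μv from funext fun k => (hμv k).symm,
    hestimation] at hdecomp
  have hnonneg : 0 ≤ (z ⬝ᵥ (Sig *ᵥ z)) * ∑ k, μv k ^ 2 :=
    mul_nonneg (hSig.dotProduct_mulVec_nonneg z) (Finset.sum_nonneg fun k _ => sq_nonneg _)
  rw [hdecomp]
  exact ⟨le_add_of_nonneg_right hnonneg, lt_add_iff_pos_right _⟩
end
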